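/- For every integer d ≥ 0, the homogeneous degree-d component (with respect to the grading on A in which the variable x_k has degree k) of the subspace span_ℂ{P_{n,m} : m ≥ n ≥ 0} of A has dimension ⌊d/2⌋ + 1. -/

import Mathlib

open MvPolynomial

noncomputable section

/-- The polynomial ring `A = ℂ[x₁, x₂, x₃, …]`, with variables indexed by
the positive integers (`X k` is the variable `x_k`). -/
abbrev A : Type := MvPolynomial ℕ+ ℂ

/-- The elementary Schur polynomials `S_k`, defined by the generating identity
`∑_{k≥0} S_k z^k = exp(∑_{n≥1} (x_n/(2n)) z^n)`; equivalently, `S_0 = 1` and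
`(k+1) S_{k+1} = ∑_{j=0}^{k} (x_{k+1-j}/2) S_j` (obtained by differentiating in `z`). -/
noncomputable def S : ℕ → A
  | 0 => 1
  | (k+1) =>
      ((k : ℂ) + 1)⁻¹ • ∑ j ∈ (Finset.range (k+1)).attach,
        (MvPolynomial.C (2⁻¹ : ℂ) * MvPolynomial.X ((k - j.1).succPNat)) * S j.1
  termination_by k => k
  decreasing_by
    have := j.2; simp only [Finset.mem_range] at this; omega

/-- The generalized binomial coefficient `C(1/2, k) = (1/2)(1/2−1)⋯(1/2−k+1)/k!`. -/
noncomputable def halfChoose (k : ℕ) : ℂ :=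
  (∏ i ∈ Finset.range k, ((2⁻¹ : ℂ) - (i : ℂ))) / (k.factorial : ℂ)

/-- `P_{n,m} = ∑_{k=0}^{n} (−1)^k C(1/2,k) S_{m+k} S_{n−k}`. -/
noncomputable def P (n m : ℕ) : A :=
  ∑ k ∈ Finset.range (n+1), ((-1 : ℂ)^k * halfChoose k) • (S (m+k) * S (n-k))

/-- The extremal vectors `φ_n = P_{n,n}`. -/
noncomputable def phi (n : ℕ) : A := P n n

/-- The translation operator `D(p) = x₁·p + ∑_{n≥1} n·x_{n+1}·∂p/∂x_n`
(the sum is finite on each polynomial: only the variables occurring in `p` contribute,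
since `∂p/∂x_n = 0` for `n ∉ p.vars`). -/
noncomputable def D (p : A) : A :=
  MvPolynomial.X 1 * p +
    ∑ n ∈ p.vars, ((n : ℕ) : ℂ) • (MvPolynomial.X (n + 1) * MvPolynomial.pderiv n p)

end

/-!
Each `P n m` is weighted homogeneous of degree `n + m`, so the degree-`d` part of the span is
spanned by the `P i (d - i)` with `i ≤ d / 2`, and the point is that these are linearly
independent. Differentiating the generating function gives `∂S_k/∂x_a = S_{k-a} / (2a)`. Hence
the functional `crossCoeff a b` (second derivative at `0` along `x_a, x_b`, corrected by a multiple
of the derivative along `x_{a+b}`) vanishes on every `S_k`, and on `S_p S_q` it only sees the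
mixed terms `∂_b S_p(0) ∂_a S_q(0) + ∂_a S_p(0) ∂_b S_q(0)`. For `a = d - i ≥ b = i ≥ 1` it
therefore sees only the leading term `S_{d-j} S_j` of `P j (d - j)` when `j ≤ i` (so only
`C(1/2, 0) = 1` matters): it is nonzero at `j = i` and vanishes for `j < i`, and a triangular
family is linearly independent.
-/

open Finset

theorem linearIndependent_of_triangular {ι K V : Type*} [Fintype ι] [LinearOrder ι] [Field K]
    [AddCommGroup V] [Module K V] (v : ι → V)
    (h : ∀ i, ∃ f : V →ₗ[K] K, f (v i) ≠ 0 ∧ ∀ j < i, f (v j) = 0) :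
    LinearIndependent K v := by
  choose f hdiag htri using h
  rw [Fintype.linearIndependent_iff]
  intro g hg i
  induction i using WellFoundedGT.induction with
  | _ i ih =>
    have := congrArg (f i) hg
    rw [map_sum, map_zero, sum_eq_single i] at this
    · simpa [hdiag i] using this
    · intro j _ hji
      rcases hji.lt_or_gt with hj | hj
      · simp [htri i j hj]
      · simp [ih j hj]
    · simp

theorem MvPolynomial.span_image_inf_weightedHomogeneousSubmodule {σ R M ι : Type*} [CommSemiring R]
    [AddCommMonoid M] (w : σ → M) (p : ι → MvPolynomial σ R) (deg : ι → M)
    (hp : ∀ i, (p i).IsWeightedHomogeneous w (deg i)) (s : Set ι) (d : M) :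
    Submodule.span R (p '' s) ⊓ weightedHomogeneousSubmodule R w d =
      Submodule.span R (p '' {i ∈ s | deg i = d}) := by
  apply le_antisymm
  · rintro x ⟨hx, hxd⟩
    rw [SetLike.mem_coe, mem_weightedHomogeneousSubmodule] at hxd
    rw [← hxd.weightedHomogeneousComponent_same]
    clear hxd
    induction hx using Submodule.span_induction with
    | mem y hy =>
      obtain ⟨i, hi, rfl⟩ := hy
      by_cases hdi : deg i = d
      · subst hdi
        rw [(hp i).weightedHomogeneousComponent_same]
        exact Submodule.subset_span ⟨i, ⟨hi, rfl⟩, rfl⟩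
      · rw [(hp i).weightedHomogeneousComponent_ne d (Ne.symm hdi)]
        exact zero_mem _
    | zero => simp
    | add y z _ _ hy hz => simpa using add_mem hy hz
    | smul r y _ hy => simpa using Submodule.smul_mem _ r hy
  · rw [Submodule.span_le]
    rintro _ ⟨i, ⟨hi, rfl⟩, rfl⟩
    exact ⟨Submodule.subset_span ⟨i, hi, rfl⟩, (hp i)⟩

theorem MvPolynomial.constantCoeff_pderiv_pderiv_mul {σ R : Type*} [CommSemiring R] (i j : σ)
    (p q : MvPolynomial σ R) :
    constantCoeff (pderiv i (pderiv j (p * q))) =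
      constantCoeff (pderiv i (pderiv j p)) * constantCoeff q +
        constantCoeff (pderiv j p) * constantCoeff (pderiv i q) +
        constantCoeff (pderiv i p) * constantCoeff (pderiv j q) +
        constantCoeff p * constantCoeff (pderiv i (pderiv j q)) := by
  simp only [pderiv_mul, map_add, map_mul]
  ring

lemma S_zero : S 0 = 1 := by rw [S]

lemma S_succ (k : ℕ) :
    S (k + 1) = ((k : ℂ) + 1)⁻¹ • ∑ j ∈ range (k + 1), C (2⁻¹ : ℂ) * X (k - j).succPNat * S j := by
  rw [S, sum_attach (range (k + 1)) fun j => C (2⁻¹ : ℂ) * X (k - j).succPNat * S j]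

lemma sum_X_mul_S (k : ℕ) :
    ∑ j ∈ range (k + 1), X (k - j).succPNat * S j = (2 * ((k : ℂ) + 1)) • S (k + 1) := by
  rw [S_succ, smul_smul, mul_assoc, mul_inv_cancel₀ (by norm_cast), mul_one, smul_sum]
  refine sum_congr rfl fun j _ => ?_
  rw [mul_assoc, ← smul_eq_C_mul, smul_smul]
  norm_num

lemma sum_X_mul_S_shift (a k : ℕ) :
    ∑ j ∈ range (k + 1), X (k - j).succPNat * (if a ≤ j then S (j - a) else 0) =
      if a ≤ k + 1 then (2 * ((k + 1 - a : ℕ) : ℂ)) • S (k + 1 - a) else 0 := by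
  by_cases hak : a ≤ k
  · obtain ⟨r, rfl⟩ := Nat.exists_eq_add_of_le hak
    rw [if_pos (by omega), add_assoc, sum_range_add,
      sum_eq_zero fun j hj => by simp [(mem_range.mp hj).not_ge], zero_add,
      show a + (r + 1) - a = r + 1 by omega, Nat.cast_succ, ← sum_X_mul_S]
    refine sum_congr rfl fun j _ => ?_
    simp [show a + r - (a + j) = r - j by omega]
  · rw [sum_eq_zero fun j hj => by simp [show ¬a ≤ j by have := mem_range.mp hj; omega]]
    split_ifs <;> simp [show k + 1 - a = 0 by omega]

lemma pderiv_S (a : ℕ+) (k : ℕ) :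
    pderiv a (S k) = if (a : ℕ) ≤ k then (2 * (a : ℂ))⁻¹ • S (k - a) else 0 := by
  induction k using Nat.strong_induction_on with
  | _ k ih =>
    rcases k with _ | k
    · simp [S_zero]
    have hdiff : (2 * ((k : ℂ) + 1)) • pderiv a (S (k + 1)) =
        (if (a : ℕ) ≤ k + 1 then S (k + 1 - a) else 0) + (2 * (a : ℂ))⁻¹ •
          ∑ j ∈ range (k + 1), X (k - j).succPNat * (if (a : ℕ) ≤ j then S (j - a) else 0) := by
      rw [← Derivation.map_smul, ← sum_X_mul_S, map_sum, smul_sum, sum_congr rfl fun j hj => by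
        rw [pderiv_mul, pderiv_X, ih j (by simpa [Nat.lt_succ_iff] using hj)], sum_add_distrib]
      congr 1
      · simp only [Pi.single_apply, ← PNat.coe_inj, Nat.succPNat_coe, ite_mul, one_mul, zero_mul]
        split_ifs with ha
        · have := a.pos
          rw [sum_eq_single_of_mem (k + 1 - a) (mem_range.mpr (by omega))
            fun j hj hne => if_neg (by have := mem_range.mp hj; omega), if_pos (by omega)]
        · exact sum_eq_zero fun j hj => if_neg (by have := mem_range.mp hj; omega)
      · refine sum_congr rfl fun j _ => ?_
        split_ifs <;> simp
    rw [sum_X_mul_S_shift] at hdiff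
    refine smul_right_injective _ (by norm_cast : (2 * ((k : ℂ) + 1)) ≠ 0) ?_
    simp only [hdiff]
    split_ifs with ha
    · match_scalars
      rw [Nat.cast_sub ha]
      have : (a : ℂ) ≠ 0 := by norm_cast; exact a.ne_zero
      field_simp
      push_cast
      ring
    · simp

lemma constantCoeff_S (k : ℕ) : constantCoeff (S k) = if k = 0 then 1 else 0 := by
  cases k with
  | zero => simp [S_zero]
  | succ k => simp [S_succ, constantCoeff_smul]

lemma constantCoeff_pderiv_S (a : ℕ+) (k : ℕ) :
    constantCoeff (pderiv a (S k)) = if k = a then (2 * (a : ℂ))⁻¹ else 0 := by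
  rw [pderiv_S]
  split_ifs with h1 h2 h2 <;> simp [constantCoeff_smul, constantCoeff_S]
  all_goals omega

lemma S_ne_zero (k : ℕ) : S k ≠ 0 := by
  rcases Nat.eq_zero_or_pos k with rfl | hk
  · simp [S_zero]
  · intro h
    have := constantCoeff_pderiv_S k.toPNat' k
    simp [h, Nat.toPNat'_coe, hk] at this
    omega

lemma isWeightedHomogeneous_S (k : ℕ) : (S k).IsWeightedHomogeneous (fun i : ℕ+ => (i : ℕ)) k := by
  induction k using Nat.strong_induction_on with
  | _ k ih =>
    rcases k with _ | k
    · simpa [S_zero] using isWeightedHomogeneous_one ℂ _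
    rw [S_succ, ← mem_weightedHomogeneousSubmodule]
    refine Submodule.smul_mem _ _ (Submodule.sum_mem _ fun j hj => ?_)
    have hj := mem_range.mp hj
    have hX := (isWeightedHomogeneous_X ℂ (fun i : ℕ+ => (i : ℕ)) (k - j).succPNat).C_mul (2⁻¹ : ℂ)
    rw [mem_weightedHomogeneousSubmodule]
    convert hX.mul (ih j hj) using 1
    simp only [Nat.succPNat_coe]
    omega

lemma isWeightedHomogeneous_P (n m : ℕ) :
    (P n m).IsWeightedHomogeneous (fun i : ℕ+ => (i : ℕ)) (n + m) := by
  rw [← mem_weightedHomogeneousSubmodule]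
  refine Submodule.sum_mem _ fun k hk => Submodule.smul_mem _ _ ?_
  rw [mem_weightedHomogeneousSubmodule]
  convert (isWeightedHomogeneous_S (m + k)).mul (isWeightedHomogeneous_S (n - k)) using 1
  have := mem_range.mp hk
  omega

/-- `(a + b) / (2ab)` is the ratio of `∂_a ∂_b S_{a+b}(0) = 1/(4ab)` to
`∂_{a+b} S_{a+b}(0) = 1/(2(a+b))`. -/
noncomputable def crossCoeff (a b : ℕ+) : A →ₗ[ℂ] ℂ :=
  lcoeff ℂ 0 ∘ₗ (pderiv a).toLinearMap ∘ₗ (pderiv b).toLinearMap -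
    (((a : ℂ) + b) / (2 * a * b)) • (lcoeff ℂ 0 ∘ₗ (pderiv (a + b)).toLinearMap)

lemma crossCoeff_apply (a b : ℕ+) (p : A) :
    crossCoeff a b p = constantCoeff (pderiv a (pderiv b p)) -
      ((a : ℂ) + b) / (2 * a * b) * constantCoeff (pderiv (a + b) p) := by
  simp [crossCoeff, ← constantCoeff_eq]

lemma crossCoeff_S (a b : ℕ+) (k : ℕ) : crossCoeff a b (S k) = 0 := by
  have ha : (a : ℂ) ≠ 0 := by norm_cast; exact a.ne_zero
  have hb : (b : ℂ) ≠ 0 := by norm_cast; exact b.ne_zero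
  have hab : (a : ℂ) + b ≠ 0 := by norm_cast; exact (a + b).ne_zero
  rw [crossCoeff_apply, pderiv_S b, constantCoeff_pderiv_S, PNat.add_coe, Nat.cast_add]
  by_cases hk : k = a + b
  · simp [hk, constantCoeff_pderiv_S]
    field_simp
    ring
  · split_ifs <;> simp [constantCoeff_pderiv_S]
    omega

lemma crossCoeff_S_mul_S (a b : ℕ+) (p q : ℕ) :
    crossCoeff a b (S p * S q) =
      constantCoeff (pderiv b (S p)) * constantCoeff (pderiv a (S q)) +
        constantCoeff (pderiv a (S p)) * constantCoeff (pderiv b (S q)) := by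
  have hp := crossCoeff_S a b p
  have hq := crossCoeff_S a b q
  rw [crossCoeff_apply] at hp hq ⊢
  rw [constantCoeff_pderiv_pderiv_mul, pderiv_mul, map_add, map_mul, map_mul]
  linear_combination constantCoeff (S q) * hp + constantCoeff (S p) * hq

lemma P_zero_left (m : ℕ) : P 0 m = S m := by
  simp [P, halfChoose, S_zero]

lemma crossCoeff_P (a b : ℕ+) (n m : ℕ) (ha : (a : ℕ) ≤ m) (hb : (b : ℕ) ≤ m) :
    crossCoeff a b (P n m) = crossCoeff a b (S m * S n) := by
  rw [P, map_sum, sum_eq_single_of_mem 0 (by simp)]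
  · simp [halfChoose]
  · intro k _ hk
    simp [crossCoeff_S_mul_S, constantCoeff_pderiv_S, show m + k ≠ a by omega,
      show m + k ≠ b by omega]

lemma linearIndependent_P (d : ℕ) :
    LinearIndependent ℂ (fun i : Fin (d / 2 + 1) => P i (d - i)) := by
  refine linearIndependent_of_triangular _ fun i => ?_
  have hi := i.isLt
  rcases (i : ℕ).eq_zero_or_pos with h0 | hpos
  · obtain ⟨f, hf⟩ := Module.Projective.exists_dual_ne_zero ℂ (S_ne_zero d)
    refine ⟨f, by simpa [h0, P_zero_left] using hf, fun j hj => absurd hj ?_⟩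
    simp [Fin.lt_def, h0]
  · obtain ⟨a, ha⟩ : ∃ a : ℕ+, (a : ℕ) = d - i := ⟨⟨d - i, by omega⟩, rfl⟩
    obtain ⟨b, hb⟩ : ∃ b : ℕ+, (b : ℕ) = i := ⟨⟨i, hpos⟩, rfl⟩
    refine ⟨crossCoeff a b, ?_, fun j hj => ?_⟩
    · rw [crossCoeff_P _ _ _ _ (by omega) (by omega), crossCoeff_S_mul_S]
      simp only [constantCoeff_pderiv_S, if_pos ha.symm, if_pos hb.symm, mul_ite, mul_zero]
      split_ifs with hia hib
      · obtain rfl : a = b := PNat.coe_inj.mp (by omega)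
        simp
      · omega
      · simp
    · rw [Fin.lt_def] at hj
      rw [crossCoeff_P _ _ _ _ (by omega) (by omega), crossCoeff_S_mul_S]
      simp [constantCoeff_pderiv_S, show (j : ℕ) ≠ a by omega, show (j : ℕ) ≠ b by omega]

/-- For every `d ≥ 0`, the homogeneous degree-`d` component (for the grading in which
`x_k` has degree `k`) of the subspace `span_ℂ{P_{n,m} : m ≥ n ≥ 0}` of `A` has
dimension `⌊d/2⌋ + 1`. -/
theorem finrank_homogeneous_component (d : ℕ) :
    Module.finrank ℂ
      ↥(Submodule.span ℂ {p : A | ∃ n m : ℕ, n ≤ m ∧ p = P n m} ⊓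
        MvPolynomial.weightedHomogeneousSubmodule ℂ (fun k : ℕ+ => (k : ℕ)) d) =
      d / 2 + 1 := by
  have hP : {p : A | ∃ n m : ℕ, n ≤ m ∧ p = P n m} =
      (fun nm : ℕ × ℕ => P nm.1 nm.2) '' {nm | nm.1 ≤ nm.2} := by
    ext p
    simp [eq_comm]
  have hPd : (fun nm : ℕ × ℕ => P nm.1 nm.2) '' {nm ∈ {nm | nm.1 ≤ nm.2} | nm.1 + nm.2 = d} =
      Set.range fun i : Fin (d / 2 + 1) => P i (d - i) := by
    ext p
    constructor
    · rintro ⟨⟨n, m⟩, ⟨hnm, rfl⟩, rfl⟩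
      exact ⟨⟨n, by have : n ≤ m := hnm; omega⟩, by simp⟩
    · rintro ⟨i, rfl⟩
      exact ⟨(i, d - i), ⟨by simp; omega, by simp; omega⟩, rfl⟩
  rw [hP, span_image_inf_weightedHomogeneousSubmodule _ _ (fun nm => nm.1 + nm.2)
    (fun nm => isWeightedHomogeneous_P nm.1 nm.2), hPd,
    finrank_span_eq_card (linearIndependent_P d), Fintype.card_fin]
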